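/- Fix k,l ≥ 1 and positive integers r_1,…,r_k, t_1,…,t_l with r_1+···+r_k = t_1+···+t_l =: R. There is a constant C = C(k,l,R) such that for every prime power q, the sum of ∏_{i=1}^k Λ(u_i) ∏_{j=1}^l Λ(v_j) over all tuples (u_1,…,u_k,v_1,…,v_l) of monic polynomials over 𝔽_q with deg u_i = r_i, deg v_j = t_j, u_1···u_k = v_1···v_l, and such that NOT all of u_1,…,u_k are irreducible and pairwise distinct, is at most C q^{R−1}. -/

import Mathlib

/-!
A term of the sum vanishes unless every `u i` and `v j` is a power of a monic irreducible, and it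
is then at most `R ^ (k + l)`, so it suffices to count such tuples. Each `v j` is a monic divisor
of `u 1 ⋯ u k`, which leaves at most `2 ^ R` choices for it. A degenerate `u` either has an entry
`u i = P ^ e` with `e ≥ 2`, so that `deg P < r i` leaves `O(q ^ (r i - 1))` choices for `u i`, or
has `u i = u j` with `i ≠ j`, so that `u i` costs no choice at all; either way `u` ranges over
`O(q ^ (R - 1))` tuples.
-/

open Polynomial BigOperators

/-- The von Mangoldt function for polynomials over a field: `Λ(u) = deg P` if `u = P^e` for
some monic irreducible `P` and some `e ≥ 1`, and `Λ(u) = 0` otherwise. -/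
noncomputable def polyVonMangoldt (F : Type) [Field F] (u : F[X]) : ℝ :=
  letI := Classical.propDecidable (∃ P : F[X], (P.Monic ∧ Irreducible P) ∧ ∃ e : ℕ, 1 ≤ e ∧ u = P ^ e)
  if h : ∃ P : F[X], (P.Monic ∧ Irreducible P) ∧ ∃ e : ℕ, 1 ≤ e ∧ u = P ^ e
  then ((Classical.choose h).natDegree : ℝ)
  else 0

open UniqueFactorizationMonoid Finset

theorem finsum_mem_le_card_mul {α : Type*} {S : Set α} {f : α → ℝ} {M : ℝ} (T : Finset α)
    (hT : S ∩ Function.support f ⊆ T) (hf : ∀ x ∈ S, f x ≤ M) (hM : 0 ≤ M) :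
    ∑ᶠ x ∈ S, f x ≤ T.card * M := by
  classical
  have hS : S ∩ Function.support f = ↑(T.filter (· ∈ S)) ∩ Function.support f := by
    ext x
    simp only [Set.mem_inter_iff, coe_filter, Set.mem_ofPred_eq]
    exact ⟨fun h => ⟨⟨hT h, h.1⟩, h.2⟩, fun h => ⟨h.1.2, h.2⟩⟩
  rw [finsum_mem_eq_sum_of_inter_support_eq f hS]
  calc ∑ x ∈ T.filter (· ∈ S), f x ≤ (T.filter (· ∈ S)).card * M :=
        (sum_le_card_nsmul _ _ _ fun x hx => hf x (mem_filter.1 hx).2).trans_eq (nsmul_eq_mul _ _)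
    _ ≤ T.card * M := by gcongr; exact filter_subset _ _

theorem card_piFinset_update_le {ι α : Type*} [Fintype ι] [DecidableEq ι] {s : ι → Finset α}
    {q : ℕ} {r : ι → ℕ} (hs : ∀ m, (s m).card ≤ q ^ r m) (i : ι) (t : Finset α) :
    (Fintype.piFinset (Function.update s i t)).card ≤ t.card * q ^ (∑ m, r m - r i) := by
  simp_rw [Fintype.card_piFinset, Function.apply_update (fun _ (x : Finset α) => x.card) s i t]
  rw [prod_update_of_mem (mem_univ i) (fun m => (s m).card), sdiff_singleton_eq_erase]
  gcongr
  calc ∏ m ∈ univ.erase i, (s m).card ≤ ∏ m ∈ univ.erase i, q ^ r m :=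
        prod_le_prod' fun m _ => hs m
    _ = q ^ (∑ m, r m - r i) := by
      rw [prod_pow_eq_pow_sum, ← add_sum_erase univ r (mem_univ i), Nat.add_sub_cancel_left]

section NormalizedDivisors

variable {α : Type*} [CommMonoidWithZero α] [StrongNormalizationMonoid α]
  [UniqueFactorizationMonoid α] [DecidableEq α]

noncomputable def normalizedDivisors (a : α) : Finset α :=
  (normalizedFactors a).powerset.toFinset.image Multiset.prod

theorem mem_normalizedDivisors {a d : α} (ha : a ≠ 0) (hd : d ∣ a) (hnorm : normalize d = d) :
    d ∈ normalizedDivisors a := by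
  have hd0 : d ≠ 0 := fun h => ha (zero_dvd_iff.1 (h ▸ hd))
  refine mem_image.2 ⟨normalizedFactors d, ?_, ?_⟩
  · rw [Multiset.mem_toFinset, Multiset.mem_powerset]
    exact (dvd_iff_normalizedFactors_le_normalizedFactors hd0 ha).1 hd
  · rw [prod_normalizedFactors_eq hd0, hnorm]

theorem card_normalizedDivisors_le (a : α) :
    (normalizedDivisors a).card ≤ 2 ^ Multiset.card (normalizedFactors a) :=
  card_image_le.trans <| (Multiset.toFinset_card_le _).trans (Multiset.card_powerset _).le

end NormalizedDivisors

theorem Polynomial.card_normalizedFactors_le_natDegree {F : Type*} [Field F] [DecidableEq F]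
    (f : F[X]) : Multiset.card (normalizedFactors f) ≤ f.natDegree := by
  rcases eq_or_ne f 0 with rfl | hf
  · simp
  have hdeg : f.natDegree = ((normalizedFactors f).map natDegree).sum := by
    rw [← natDegree_multiset_prod _ (zero_notMem_normalizedFactors f)]
    exact natDegree_eq_of_degree_eq
      (degree_eq_degree_of_associated (prod_normalizedFactors hf)).symm
  calc Multiset.card (normalizedFactors f) = ((normalizedFactors f).map fun _ => 1).sum := by simp
    _ ≤ f.natDegree := hdeg ▸ Multiset.sum_map_le_sum_map _ _ fun P hP =>
        (irreducible_of_normalized_factor P hP).natDegree_pos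

section MonicsOfDegree

variable (R : Type*) [Semiring R] [Fintype R] [DecidableEq R]

noncomputable def monicsOfDegree (d : ℕ) : Finset R[X] :=
  univ.image fun c : Fin d → R => X ^ d + ∑ i : Fin d, C (c i) * X ^ (i : ℕ)

variable {R}

theorem Polynomial.Monic.mem_monicsOfDegree {p : R[X]} (hp : p.Monic) :
    p ∈ monicsOfDegree R p.natDegree :=
  mem_image.2 ⟨fun i => p.coeff i, mem_univ _, by conv_rhs => rw [hp.as_sum, sum_range]⟩

theorem card_monicsOfDegree_le (d : ℕ) : (monicsOfDegree R d).card ≤ Fintype.card R ^ d :=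
  card_image_le.trans (by simp)

variable (R)

noncomputable def powersOfMonicsOfDegreeLT (n : ℕ) : Finset R[X] :=
  (range n).biUnion fun d =>
    (monicsOfDegree R d).biUnion fun P => (range (n + 1)).image (P ^ · : ℕ → R[X])

variable {R}

theorem pow_mem_powersOfMonicsOfDegreeLT {P : R[X]} (hP : P.Monic) {n e : ℕ}
    (hd : P.natDegree < n) (he : e ≤ n) : P ^ e ∈ powersOfMonicsOfDegreeLT R n :=
  mem_biUnion.2 ⟨_, mem_range.2 hd, mem_biUnion.2 ⟨P, hP.mem_monicsOfDegree,
    mem_image.2 ⟨e, mem_range.2 (Nat.lt_succ_of_le he), rfl⟩⟩⟩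

theorem card_powersOfMonicsOfDegreeLT_le (n : ℕ) :
    (powersOfMonicsOfDegreeLT R n).card ≤ n * (Fintype.card R ^ (n - 1) * (n + 1)) := by
  have hd : ∀ d ∈ range n, ((monicsOfDegree R d).biUnion fun P =>
      (range (n + 1)).image (P ^ · : ℕ → R[X])).card ≤ Fintype.card R ^ (n - 1) * (n + 1) := by
    intro d hd
    refine card_biUnion_le.trans ((sum_le_card_nsmul _ _ (n + 1) fun P _ =>
      card_image_le.trans (card_range _).le).trans ?_)
    rw [smul_eq_mul]
    gcongr
    refine (card_monicsOfDegree_le d).trans (Nat.pow_le_pow_right Fintype.card_pos ?_)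
    have := mem_range.1 hd
    omega
  exact card_biUnion_le.trans ((sum_le_card_nsmul _ _ _ hd).trans_eq (by simp))

end MonicsOfDegree

section VonMangoldt

variable {F : Type} [Field F]

theorem polyVonMangoldt_nonneg (u : F[X]) : 0 ≤ polyVonMangoldt F u := by
  unfold polyVonMangoldt
  split <;> positivity

theorem polyVonMangoldt_le_natDegree (u : F[X]) : polyVonMangoldt F u ≤ u.natDegree := by
  unfold polyVonMangoldt
  split
  · rename_i h
    obtain ⟨-, e, he, hu⟩ := Classical.choose_spec h
    conv_rhs => rw [hu, natDegree_pow]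
    exact_mod_cast Nat.le_mul_of_pos_left _ he
  · positivity

theorem exists_eq_pow_of_polyVonMangoldt_ne_zero {u : F[X]} (h : polyVonMangoldt F u ≠ 0) :
    ∃ P : F[X], (P.Monic ∧ Irreducible P) ∧ ∃ e : ℕ, 1 ≤ e ∧ u = P ^ e := by
  by_contra hu
  exact h (by unfold polyVonMangoldt; exact dif_neg hu)

theorem prod_polyVonMangoldt_le {ι : Type*} [Fintype ι] {u : ι → F[X]} {R : ℕ}
    (hu : ∀ i, (u i).natDegree ≤ R) : ∏ i, polyVonMangoldt F (u i) ≤ (R : ℝ) ^ Fintype.card ι :=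
  (prod_le_prod (fun i _ => polyVonMangoldt_nonneg _) fun i _ =>
    (polyVonMangoldt_le_natDegree _).trans (Nat.cast_le.2 (hu i))).trans_eq (by simp)

variable [Fintype F] [DecidableEq F]

theorem mem_powersOfMonicsOfDegreeLT_of_polyVonMangoldt_ne_zero {u : F[X]}
    (hΛ : polyVonMangoldt F u ≠ 0) (hu : ¬Irreducible u) :
    u ∈ powersOfMonicsOfDegreeLT F u.natDegree := by
  obtain ⟨P, ⟨hPm, hPi⟩, e, he, rfl⟩ := exists_eq_pow_of_polyVonMangoldt_ne_zero hΛ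
  have he2 : 2 ≤ e := by
    by_contra! h
    obtain rfl : e = 1 := by omega
    exact hu (by simpa using hPi)
  have hP := hPi.natDegree_pos
  rw [natDegree_pow]
  refine pow_mem_powersOfMonicsOfDegreeLT hPm ?_ (Nat.le_mul_of_pos_right _ hP)
  calc P.natDegree < 2 * P.natDegree := by omega
    _ ≤ e * P.natDegree := Nat.mul_le_mul_right _ he2

end VonMangoldt

section DegenerateTuples

variable (F : Type) [Field F] [Fintype F] [DecidableEq F] {ι : Type*} [Fintype ι] [DecidableEq ι]

/-- Contains every degenerate tuple of prime powers: those whose `i`-th entry is a prime power with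
exponent `≥ 2`, and those whose `i`-th entry repeats the `j`-th (rebuilt from the tuple with `1` in
slot `i`). -/
noncomputable def degenerateCandidates (r : ι → ℕ) : Finset (ι → F[X]) :=
  (univ.biUnion fun i => Fintype.piFinset <|
      Function.update (fun m => monicsOfDegree F (r m)) i (powersOfMonicsOfDegreeLT F (r i))) ∪
    (univ ×ˢ univ).biUnion fun ij : ι × ι =>
      (Fintype.piFinset (Function.update (fun m => monicsOfDegree F (r m)) ij.1 {1})).image
        fun u => Function.update u ij.1 (u ij.2)

variable {F}

theorem mem_degenerateCandidates {r : ι → ℕ} {u : ι → F[X]}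
    (hu : ∀ i, (u i).Monic ∧ (u i).natDegree = r i) (hΛ : ∀ i, polyVonMangoldt F (u i) ≠ 0)
    (hdeg : ¬((∀ i, Irreducible (u i)) ∧ Function.Injective u)) :
    u ∈ degenerateCandidates F r := by
  have hmem : ∀ m, u m ∈ monicsOfDegree F (r m) := fun m => (hu m).2 ▸ (hu m).1.mem_monicsOfDegree
  rw [not_and_or, not_forall, Function.not_injective_iff] at hdeg
  rcases hdeg with ⟨i, hi⟩ | ⟨i, j, huij, hij⟩
  · refine mem_union_left _ (mem_biUnion.2 ⟨i, mem_univ _, Fintype.mem_piFinset.2 fun m => ?_⟩)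
    rcases eq_or_ne m i with rfl | hm
    · simpa [← (hu m).2] using mem_powersOfMonicsOfDegreeLT_of_polyVonMangoldt_ne_zero (hΛ m) hi
    · simpa [hm] using hmem m
  · refine mem_union_right _ (mem_biUnion.2 ⟨(i, j), mem_univ _, mem_image.2
      ⟨Function.update u i 1, Fintype.mem_piFinset.2 fun m => ?_, ?_⟩⟩)
    · rcases eq_or_ne m i with rfl | hm
      · simp
      · simpa [hm] using hmem m
    · simp [Function.update_of_ne (Ne.symm hij), huij]

theorem card_degenerateCandidates_le {r : ι → ℕ} (hr : ∀ i, 1 ≤ r i) :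
    (degenerateCandidates F r).card ≤
      (Fintype.card ι * ((∑ i, r i) * (∑ i, r i + 1)) + Fintype.card ι ^ 2) *
        Fintype.card F ^ (∑ i, r i - 1) := by
  set q := Fintype.card F
  set R := ∑ i, r i
  have hrR : ∀ i, r i ≤ R := fun i => single_le_sum (fun _ _ => Nat.zero_le _) (mem_univ i)
  have hM : ∀ m, (monicsOfDegree F (r m)).card ≤ q ^ r m := fun m => card_monicsOfDegree_le _
  have hA : ∀ i, (Fintype.piFinset (Function.update (fun m => monicsOfDegree F (r m)) i
      (powersOfMonicsOfDegreeLT F (r i)))).card ≤ R * (R + 1) * q ^ (R - 1) := by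
    intro i
    refine (card_piFinset_update_le hM i _).trans ?_
    calc (powersOfMonicsOfDegreeLT F (r i)).card * q ^ (R - r i)
        ≤ r i * (q ^ (r i - 1) * (r i + 1)) * q ^ (R - r i) := by
          gcongr; exact card_powersOfMonicsOfDegreeLT_le _
      _ = r i * (r i + 1) * q ^ (R - 1) := by
          rw [show R - 1 = (r i - 1) + (R - r i) by have := hr i; have := hrR i; omega, pow_add]
          ring
      _ ≤ R * (R + 1) * q ^ (R - 1) := by gcongr <;> exact hrR i
  have hB : ∀ ij : ι × ι, ((Fintype.piFinset (Function.update (fun m => monicsOfDegree F (r m))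
      ij.1 {1})).image fun u => Function.update u ij.1 (u ij.2)).card ≤ q ^ (R - 1) := by
    intro ij
    refine card_image_le.trans ((card_piFinset_update_le hM ij.1 _).trans ?_)
    rw [card_singleton, one_mul]
    exact Nat.pow_le_pow_right Fintype.card_pos (by have := hr ij.1; omega)
  calc (degenerateCandidates F r).card
      ≤ Fintype.card ι * (R * (R + 1) * q ^ (R - 1)) + Fintype.card (ι × ι) * q ^ (R - 1) := by
        refine (card_union_le _ _).trans (add_le_add ?_ ?_)
        · exact card_biUnion_le.trans
            ((sum_le_card_nsmul _ _ _ fun i _ => hA i).trans_eq (by simp))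
        · exact card_biUnion_le.trans
            ((sum_le_card_nsmul _ _ _ fun ij _ => hB ij).trans_eq (by simp))
    _ = _ := by rw [Fintype.card_prod]; ring

variable (F) in
noncomputable def degeneratePairCandidates (r : ι → ℕ) (κ : Type*) [Fintype κ] [DecidableEq κ] :
    Finset ((ι → F[X]) × (κ → F[X])) :=
  ((degenerateCandidates F r).filter fun u => (∏ i, u i).natDegree = ∑ i, r i).biUnion fun u =>
    (Fintype.piFinset fun _ : κ => normalizedDivisors (∏ i, u i)).image (Prod.mk u)

theorem mem_degeneratePairCandidates {κ : Type*} [Fintype κ] [DecidableEq κ] {r : ι → ℕ}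
    {u : ι → F[X]} {v : κ → F[X]} (hu : ∀ i, (u i).Monic ∧ (u i).natDegree = r i)
    (hv : ∀ j, (v j).Monic) (hprod : ∏ i, u i = ∏ j, v j)
    (hdeg : ¬((∀ i, Irreducible (u i)) ∧ Function.Injective u))
    (hΛ : ∀ i, polyVonMangoldt F (u i) ≠ 0) :
    (u, v) ∈ degeneratePairCandidates F r κ := by
  have hmonic : (∏ i, u i).Monic := monic_prod_of_monic _ _ fun i _ => (hu i).1
  refine mem_biUnion.2 ⟨u, mem_filter.2 ⟨mem_degenerateCandidates hu hΛ hdeg, ?_⟩,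
    mem_image.2 ⟨v, Fintype.mem_piFinset.2 fun j => ?_, rfl⟩⟩
  · rw [natDegree_prod_of_monic _ _ fun i _ => (hu i).1]
    exact sum_congr rfl fun i _ => (hu i).2
  · refine mem_normalizedDivisors hmonic.ne_zero ?_ (hv j).normalize_eq_self
    exact hprod ▸ dvd_prod_of_mem v (mem_univ j)

theorem card_degeneratePairCandidates_le (r : ι → ℕ) (κ : Type*) [Fintype κ] [DecidableEq κ] :
    (degeneratePairCandidates F r κ).card ≤
      (degenerateCandidates F r).card * (2 ^ ∑ i, r i) ^ Fintype.card κ := by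
  refine card_biUnion_le.trans <|
    (sum_le_card_nsmul _ _ ((2 ^ ∑ i, r i) ^ Fintype.card κ) fun u hu => ?_).trans ?_
  · refine card_image_le.trans ?_
    rw [Fintype.card_piFinset, prod_const, card_univ]
    gcongr
    refine (card_normalizedDivisors_le _).trans (Nat.pow_le_pow_right two_pos ?_)
    exact (card_normalizedFactors_le_natDegree _).trans (mem_filter.1 hu).2.le
  · rw [smul_eq_mul]
    gcongr
    exact filter_subset _ _

end DegenerateTuples

theorem degenerate_tuples_contribution_general (k l : ℕ) (R : ℕ) :
    ∃ C : ℝ, ∀ (r : Fin k → ℕ) (t : Fin l → ℕ),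
      (∀ i, 1 ≤ r i) → (∀ j, 1 ≤ t j) → ∑ i, r i = R → ∑ j, t j = R →
      ∀ (F : Type) [Field F] [Fintype F],
        (∑ᶠ (w : (Fin k → F[X]) × (Fin l → F[X]))
            (_ : (∀ i, (w.1 i).Monic ∧ (w.1 i).natDegree = r i) ∧
                 (∀ j, (w.2 j).Monic ∧ (w.2 j).natDegree = t j) ∧
                 (∏ i, w.1 i) = (∏ j, w.2 j) ∧
                 ¬ ((∀ i, Irreducible (w.1 i)) ∧ Function.Injective w.1)),
          (∏ i, polyVonMangoldt F (w.1 i)) * ∏ j, polyVonMangoldt F (w.2 j)) ≤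
        C * (Fintype.card F : ℝ) ^ (R - 1) := by
  refine ⟨((k * (R * (R + 1)) + k ^ 2) * (2 ^ R) ^ l : ℕ) * (R : ℝ) ^ (k + l), ?_⟩
  intro r t hr _ hrR htR F _ _
  classical
  have hrle : ∀ i, r i ≤ R := fun i => hrR ▸ single_le_sum (fun _ _ => Nat.zero_le _) (mem_univ i)
  have htle : ∀ j, t j ≤ R := fun j => htR ▸ single_le_sum (fun _ _ => Nat.zero_le _) (mem_univ j)
  refine (finsum_mem_le_card_mul (S := {w | _}) (M := (R : ℝ) ^ (k + l))
    (degeneratePairCandidates F r (Fin l)) ?_ ?_ (by positivity)).trans ?_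
  · rintro ⟨u, v⟩ ⟨⟨hu, hv, hprod, hdeg⟩, hw⟩
    exact mem_degeneratePairCandidates hu (fun j => (hv j).1) hprod hdeg
      (prod_ne_zero_iff.1 (left_ne_zero_of_mul hw) · (mem_univ _))
  · rintro ⟨u, v⟩ ⟨hu, hv, -⟩
    rw [pow_add]
    refine mul_le_mul ?_ ?_ (prod_nonneg fun _ _ => polyVonMangoldt_nonneg _) (by positivity)
    · simpa using prod_polyVonMangoldt_le fun i => (hu i).2.trans_le (hrle i)
    · simpa using prod_polyVonMangoldt_le fun j => (hv j).2.trans_le (htle j)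
  · have hcard := (card_degeneratePairCandidates_le (F := F) r (Fin l)).trans
      (Nat.mul_le_mul_right _ (card_degenerateCandidates_le hr))
    simp only [Fintype.card_fin, hrR] at hcard
    rw [mul_right_comm]
    gcongr
    exact_mod_cast hcard.trans_eq (by ring)

/-- **Degenerate tuples contribute `O(q^(R-1))`.** Fix `k, l ≥ 1` and positive integers
`r 1, …, r k`, `t 1, …, t l` with `∑ r i = ∑ t j = R`. There is a constant `C = C(k, l, R)`
such that for every finite field `𝔽_q`, the sum of `∏ Λ(u i) ∏ Λ(v j)` over all tuples of
monic polynomials with `deg (u i) = r i`, `deg (v j) = t j`, `u 1 ⋯ u k = v 1 ⋯ v l` such that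
NOT all of the `u i` are irreducible and pairwise distinct, is at most `C q^(R-1)`. -/
theorem degenerate_tuples_contribution (k l : ℕ) (hk : 1 ≤ k) (hl : 1 ≤ l) (R : ℕ) :
    ∃ C : ℝ, ∀ (r : Fin k → ℕ) (t : Fin l → ℕ),
      (∀ i, 1 ≤ r i) → (∀ j, 1 ≤ t j) → ∑ i, r i = R → ∑ j, t j = R →
      ∀ (F : Type) [Field F] [Fintype F],
        (∑ᶠ (w : (Fin k → F[X]) × (Fin l → F[X]))
            (_ : (∀ i, (w.1 i).Monic ∧ (w.1 i).natDegree = r i) ∧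
                 (∀ j, (w.2 j).Monic ∧ (w.2 j).natDegree = t j) ∧
                 (∏ i, w.1 i) = (∏ j, w.2 j) ∧
                 ¬ ((∀ i, Irreducible (w.1 i)) ∧ Function.Injective w.1)),
          (∏ i, polyVonMangoldt F (w.1 i)) * ∏ j, polyVonMangoldt F (w.2 j)) ≤
        C * (Fintype.card F : ℝ) ^ (R - 1) :=
  degenerate_tuples_contribution_general k l R
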